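/- The bracket operation [L_{(a₁,b₁)}, L_{(a₂,b₂)}] = (a₂-a₁)L_{(a₁+a₂, b₁+b₂+1)} + (b₂-b₁)L_{(a₁+a₂, b₁+b₂)} defines a Lie algebra structure on the free module with basis {L_{(a,b)} : a,b ∈ ℤ}; in particular the Jacobi identity holds. -/

import Mathlib

/-!
Identify `(ℤ × ℤ) →₀ ℂ` with the Laurent polynomial ring `ℂ[ℤ × ℤ] = ℂ[x^±1, t^±1]`,
writing `L_{(a,b)} = x^a t^b`. The derivation `D = t·x∂ₓ + t∂ₜ` sends `x^a t^b` to
`a x^a t^(b+1) + b x^a t^b`, so the bracket is the Witt-type bracket `[f, g] = f D g - g D f`.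
For any derivation `D` of a commutative ring this bracket is alternating, and it satisfies the
Jacobi identity: after the Leibniz rule, the terms `f g D²h` and `f Dg Dh` cancel in the cyclic
sum.
-/

/-- Basis vector L_{(a,b)} of the non-graded Virasoro-like algebra. -/
noncomputable def Lgen (a b : ℤ) : (ℤ × ℤ) →₀ ℂ := Finsupp.single (a, b) 1

/-- The bracket [L_{(a₁,b₁)}, L_{(a₂,b₂)}] = (a₂-a₁)L_{(a₁+a₂,b₁+b₂+1)}
+ (b₂-b₁)L_{(a₁+a₂,b₁+b₂)}, extended bilinearly. -/
noncomputable def wbr (x y : (ℤ × ℤ) →₀ ℂ) : (ℤ × ℤ) →₀ ℂ :=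
  x.sum fun p c => y.sum fun q d =>
    (c * d) • (((q.1 - p.1 : ℤ) : ℂ) • Lgen (p.1 + q.1) (p.2 + q.2 + 1)
      + ((q.2 - p.2 : ℤ) : ℂ) • Lgen (p.1 + q.1) (p.2 + q.2))

namespace Derivation

variable {R A : Type*} [CommSemiring R] [CommRing A] [Algebra R A] (D : Derivation R A A)

def wittBracket : A →ₗ[R] A →ₗ[R] A :=
  (LinearMap.mul R A).compl₂ D.toLinearMap - ((LinearMap.mul R A).compl₂ D.toLinearMap).flip

lemma wittBracket_apply (f g : A) : D.wittBracket f g = f * D g - g * D f := rfl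

lemma wittBracket_self (f : A) : D.wittBracket f f = 0 := by
  simp [wittBracket_apply]

lemma wittBracket_jacobi (f g h : A) :
    D.wittBracket f (D.wittBracket g h) + D.wittBracket g (D.wittBracket h f)
      + D.wittBracket h (D.wittBracket f g) = 0 := by
  simp only [wittBracket_apply, map_sub, leibniz, smul_eq_mul]
  ring

end Derivation

namespace AddMonoidAlgebra

variable {R G : Type*} [CommSemiring R] [AddCommMonoid G]

noncomputable def degreeLinearMap (φ : G →+ R) : R[G] →ₗ[R] R[G] :=
  Finsupp.lsum R (fun g => φ g • lsingle g) ∘ₗ (coeffLinearEquiv R).toLinearMap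

@[simp]
lemma degreeLinearMap_single (φ : G →+ R) (g : G) (c : R) :
    degreeLinearMap φ (single g c) = φ g • single g c := by
  simp [degreeLinearMap, coeffLinearEquiv]

lemma degreeLinearMap_mul (φ : G →+ R) (x y : R[G]) :
    degreeLinearMap φ (x * y) = x * degreeLinearMap φ y + y * degreeLinearMap φ x := by
  induction x using induction_linear with
  | zero => simp
  | add x x' hx hx' => simp only [add_mul, map_add, hx, hx']; ring
  | single g c =>
    induction y using induction_linear with
    | zero => simp
    | add y y' hy hy' => simp only [mul_add, map_add, hy, hy']; ring
    | single h d =>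
      simp only [single_mul_single, degreeLinearMap_single, smul_single, smul_eq_mul, map_add,
        add_comm h g, ← single_add]
      congr 1
      ring

noncomputable def degreeDerivation (φ : G →+ R) : Derivation R R[G] R[G] where
  toLinearMap := degreeLinearMap φ
  map_one_eq_zero' := by simp [one_def]
  leibniz' := degreeLinearMap_mul φ

@[simp]
lemma degreeDerivation_single (φ : G →+ R) (g : G) (c : R) :
    degreeDerivation φ (single g c) = φ g • single g c :=
  degreeLinearMap_single φ g c

end AddMonoidAlgebra

open AddMonoidAlgebra

noncomputable def virasoroLikeDerivation : Derivation ℂ ℂ[ℤ × ℤ] ℂ[ℤ × ℤ] :=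
  (single (0, 1) 1 : ℂ[ℤ × ℤ]) •
      degreeDerivation ((Int.castAddHom ℂ).comp (AddMonoidHom.fst ℤ ℤ))
    + degreeDerivation ((Int.castAddHom ℂ).comp (AddMonoidHom.snd ℤ ℤ))

lemma virasoroLikeDerivation_single (a b : ℤ) (c : ℂ) :
    virasoroLikeDerivation (single (a, b) c) =
      (a : ℂ) • single (a, b + 1) c + (b : ℂ) • single (a, b) c := by
  simp [virasoroLikeDerivation, single_mul_single, smul_single, add_comm]

noncomputable def virasoroLikeBracket :
    ((ℤ × ℤ) →₀ ℂ) →ₗ[ℂ] ((ℤ × ℤ) →₀ ℂ) →ₗ[ℂ] ((ℤ × ℤ) →₀ ℂ) :=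
  (virasoroLikeDerivation.wittBracket.compl₁₂ (coeffLinearEquiv ℂ).symm.toLinearMap
    (coeffLinearEquiv ℂ).symm.toLinearMap).compr₂ (coeffLinearEquiv ℂ).toLinearMap

lemma virasoroLikeBracket_apply (x y : (ℤ × ℤ) →₀ ℂ) :
    virasoroLikeBracket x y = coeffLinearEquiv ℂ
      (virasoroLikeDerivation.wittBracket ((coeffLinearEquiv ℂ).symm x)
        ((coeffLinearEquiv ℂ).symm y)) :=
  rfl

lemma virasoroLikeBracket_single (p q : ℤ × ℤ) (c d : ℂ) :
    virasoroLikeBracket (Finsupp.single p c) (Finsupp.single q d) =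
      (c * d) • (((q.1 - p.1 : ℤ) : ℂ) • Lgen (p.1 + q.1) (p.2 + q.2 + 1)
        + ((q.2 - p.2 : ℤ) : ℂ) • Lgen (p.1 + q.1) (p.2 + q.2)) := by
  obtain ⟨a, b⟩ := p
  obtain ⟨a', b'⟩ := q
  change coeff (virasoroLikeDerivation.wittBracket (single (a, b) c) (single (a', b') d)) = _
  rw [Derivation.wittBracket_apply, virasoroLikeDerivation_single, virasoroLikeDerivation_single,
    mul_comm (single (a', b') d)]
  simp only [mul_add, add_mul, mul_smul_comm, smul_mul_assoc, single_mul_single, Prod.mk_add_mk,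
    coeff_add, coeff_sub, coeff_smul, coeff_single, Lgen, add_right_comm b 1 b', add_assoc b b' 1]
  rw [← Finsupp.smul_single_one _ (c * d), ← Finsupp.smul_single_one _ (c * d)]
  push_cast
  module

lemma wbr_eq_virasoroLikeBracket (x y : (ℤ × ℤ) →₀ ℂ) :
    wbr x y = virasoroLikeBracket x y := by
  conv_rhs => rw [← Finsupp.sum_single x, ← Finsupp.sum_single y]
  simp only [map_finsuppSum, LinearMap.finsupp_sum_apply, virasoroLikeBracket_single]
  exact Finsupp.sum_comm _ _ _

lemma virasoroLikeBracket_self (x : (ℤ × ℤ) →₀ ℂ) : virasoroLikeBracket x x = 0 := by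
  simp [virasoroLikeBracket_apply, Derivation.wittBracket_self]

lemma virasoroLikeBracket_jacobi (x y z : (ℤ × ℤ) →₀ ℂ) :
    virasoroLikeBracket x (virasoroLikeBracket y z)
      + virasoroLikeBracket y (virasoroLikeBracket z x)
      + virasoroLikeBracket z (virasoroLikeBracket x y) = 0 := by
  simp only [virasoroLikeBracket_apply, LinearEquiv.symm_apply_apply, ← map_add,
    Derivation.wittBracket_jacobi, map_zero]

theorem stmt_1 :
    (∀ x x' y : (ℤ × ℤ) →₀ ℂ, wbr (x + x') y = wbr x y + wbr x' y) ∧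
    (∀ (c : ℂ) (x y : (ℤ × ℤ) →₀ ℂ), wbr (c • x) y = c • wbr x y) ∧
    (∀ x y y' : (ℤ × ℤ) →₀ ℂ, wbr x (y + y') = wbr x y + wbr x y') ∧
    (∀ (c : ℂ) (x y : (ℤ × ℤ) →₀ ℂ), wbr x (c • y) = c • wbr x y) ∧
    (∀ x : (ℤ × ℤ) →₀ ℂ, wbr x x = 0) ∧
    (∀ x y z : (ℤ × ℤ) →₀ ℂ,
      wbr x (wbr y z) + wbr y (wbr z x) + wbr z (wbr x y) = 0) := by
  simp only [wbr_eq_virasoroLikeBracket]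
  exact ⟨fun x x' y => LinearMap.map_add₂ _ x x' y, fun c x y => LinearMap.map_smul₂ _ c x y,
    fun x y y' => map_add _ y y', fun c x y => map_smul _ c y, virasoroLikeBracket_self,
    virasoroLikeBracket_jacobi⟩
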